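/- arXiv:2307.01194 — 8 statements merged into one kernel-verified Lean document; each statement's English description precedes it below -/
import Mathlib

section
/- Let (A_i)_{i≥1} be a sequence of events in a probability space such that ∑_{i=1}^∞ P(A_i) = ∞. Then the probability that infinitely many of the events A_i occur is at least limsup_{n→∞} (∑_{i=1}^n P(A_i))² / (∑_{i,j=1}^n P(A_i ∩ A_j)). -/
/-!
Second moment method. Fix `m`. Cauchy–Schwarz applied to `N = ∑_{m ≤ i < n} 1_{A_i}`, which
vanishes outside `⋃_{i ≥ m} A_i`, gives
`(∑_{m ≤ i < n} P(A_i))² ≤ (∑_{i,j < n} P(A_i ∩ A_j)) · P(⋃_{i ≥ m} A_i)`.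
As the partial sums diverge, dropping the first `m` terms of the numerator does not change the
limsup of the ratio, so that limsup is at most `P(⋃_{i ≥ m} A_i)` for every `m`; these
probabilities decrease to `P(limsup A_i)`.
-/

open MeasureTheory Filter Set
open scoped ENNReal Topology

theorem sq_lintegral_le_lintegral_sq_mul_measure_univ {Ω : Type*} [MeasurableSpace Ω]
    (μ : Measure Ω) {f : Ω → ℝ≥0∞} (hf : AEMeasurable f μ) :
    (∫⁻ ω, f ω ∂μ) ^ 2 ≤ (∫⁻ ω, f ω ^ 2 ∂μ) * μ univ := by
  have holder := ENNReal.lintegral_mul_le_Lp_mul_Lq μ .two_two hf aemeasurable_const (g := 1)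
  simp only [Pi.mul_apply, Pi.one_apply, mul_one, one_pow, lintegral_const, one_mul,
    ENNReal.rpow_two] at holder
  calc (∫⁻ ω, f ω ∂μ) ^ 2
      ≤ ((∫⁻ ω, f ω ^ 2 ∂μ) ^ (1 / 2 : ℝ) * μ univ ^ (1 / 2 : ℝ)) ^ 2 := by gcongr
    _ = (∫⁻ ω, f ω ^ 2 ∂μ) * μ univ := by
      rw [← ENNReal.mul_rpow_of_nonneg _ _ (by norm_num), ← ENNReal.rpow_two,
        ← ENNReal.rpow_mul]
      norm_num

theorem sq_sum_measure_le_sum_measure_inter_mul_measure_biUnion {Ω ι : Type*}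
    [MeasurableSpace Ω] (μ : Measure Ω) {A : ι → Set Ω} (hA : ∀ i, MeasurableSet (A i))
    (s : Finset ι) :
    (∑ i ∈ s, μ (A i)) ^ 2 ≤ (∑ i ∈ s, ∑ j ∈ s, μ (A i ∩ A j)) * μ (⋃ i ∈ s, A i) := by
  set E := ⋃ i ∈ s, A i
  have hAE : ∀ i ∈ s, A i ⊆ E := fun i hi => subset_biUnion_of_mem hi
  set f : Ω → ℝ≥0∞ := fun ω => ∑ i ∈ s, (A i).indicator 1 ω
  have hf : Measurable f := Finset.measurable_sum s fun i _ => measurable_one.indicator (hA i)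
  have hf_sq : ∀ ω, f ω ^ 2 = ∑ i ∈ s, ∑ j ∈ s, (A i ∩ A j).indicator 1 ω := by
    intro ω
    simp only [f, sq, Finset.sum_mul_sum, inter_indicator_one, Pi.mul_apply]
  have h_int : ∫⁻ ω, f ω ∂μ.restrict E = ∑ i ∈ s, μ (A i) := by
    rw [lintegral_finsetSum _ fun i _ => measurable_one.indicator (hA i)]
    refine Finset.sum_congr rfl fun i hi => ?_
    rw [lintegral_indicator_one (hA i), Measure.restrict_apply (hA i),
      inter_eq_left.2 (hAE i hi)]
  have h_int_sq : ∫⁻ ω, f ω ^ 2 ∂μ.restrict E ≤ ∑ i ∈ s, ∑ j ∈ s, μ (A i ∩ A j) := by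
    simp only [hf_sq]
    rw [lintegral_finsetSum _ fun i _ => Finset.measurable_sum s fun j _ =>
      measurable_one.indicator ((hA i).inter (hA j))]
    refine Finset.sum_le_sum fun i _ => ?_
    rw [lintegral_finsetSum _ fun j _ => measurable_one.indicator ((hA i).inter (hA j))]
    refine Finset.sum_le_sum fun j _ => ?_
    rw [lintegral_indicator_one ((hA i).inter (hA j))]
    exact Measure.restrict_le_self _
  calc (∑ i ∈ s, μ (A i)) ^ 2 = (∫⁻ ω, f ω ∂μ.restrict E) ^ 2 := by rw [h_int]
    _ ≤ (∫⁻ ω, f ω ^ 2 ∂μ.restrict E) * μ.restrict E univ :=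
      sq_lintegral_le_lintegral_sq_mul_measure_univ _ hf.aemeasurable
    _ ≤ (∑ i ∈ s, ∑ j ∈ s, μ (A i ∩ A j)) * μ E := by
      rw [Measure.restrict_apply_univ]
      gcongr

theorem measure_limsup_atTop_eq_iInf_measure_iUnion_ge {Ω : Type*} [MeasurableSpace Ω]
    (μ : Measure Ω) [IsFiniteMeasure μ] {A : ℕ → Set Ω} (hA : ∀ i, NullMeasurableSet (A i) μ) :
    μ (limsup A atTop) = ⨅ m, μ (⋃ i ≥ m, A i) := by
  rw [limsup_eq_iInf_iSup_of_nat]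
  simp only [iInf_eq_iInter, iSup_eq_iUnion]
  refine Antitone.measure_iInter (fun m m' h => biUnion_mono (fun i hi => le_trans h hi)
    fun _ _ => le_rfl) (fun m => .biUnion (to_countable _) fun i _ => hA i)
    ⟨0, measure_ne_top μ _⟩

theorem ENNReal.add_le_one_add_div_mul {b : ℝ≥0∞} (c : ℝ≥0∞) (hb : b ≠ 0) :
    c + b ≤ (1 + c / b) * b := by
  rcases eq_or_ne b ∞ with rfl | hb_top
  · simp
  · rw [add_mul, one_mul, ENNReal.div_mul_cancel hb hb_top, add_comm]

theorem limsup_sq_div_le_of_tendsto_top {α : Type*} {l : Filter α} [l.NeBot]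
    {a T : α → ℝ≥0∞} {c x : ℝ≥0∞} (hc : c ≠ ∞) (ha : Tendsto a l (𝓝 ∞))
    (hT : ∀ᶠ n in l, (a n - c) ^ 2 ≤ T n * x) :
    limsup (fun n => a n ^ 2 / T n) l ≤ x := by
  have hb : Tendsto (fun n => a n - c) l (𝓝 ∞) := by
    simpa [hc] using ENNReal.Tendsto.sub ha tendsto_const_nhds (Or.inr hc)
  have h_lim : Tendsto (fun n => (1 + c / (a n - c)) ^ 2 * x) l (𝓝 x) := by
    have := ENNReal.Tendsto.pow (n := 2) ((ENNReal.Tendsto.const_div hb (Or.inr hc)).const_add 1)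
    simpa using ENNReal.Tendsto.mul_const this (Or.inl (by simp))
  refine (limsup_le_limsup ?_).trans_eq h_lim.limsup_eq
  filter_upwards [hT, hb.eventually_ne ENNReal.top_ne_zero] with n hn hb0
  refine ENNReal.div_le_of_le_mul ?_
  calc a n ^ 2 ≤ ((1 + c / (a n - c)) * (a n - c)) ^ 2 := by
        gcongr
        exact le_add_tsub.trans (ENNReal.add_le_one_add_div_mul c hb0)
    _ = (1 + c / (a n - c)) ^ 2 * (a n - c) ^ 2 := mul_pow _ _ _
    _ ≤ (1 + c / (a n - c)) ^ 2 * (T n * x) := by gcongr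
    _ = (1 + c / (a n - c)) ^ 2 * x * T n := by ring

/-- **Kochen–Stone theorem.** If the probabilities of a sequence of events sum to infinity,
then the probability that infinitely many of them occur is at least
`limsup_n (∑_{i<n} P(A_i))² / (∑_{i,j<n} P(A_i ∩ A_j))`. -/
theorem kochen_stone {Ω : Type*} [MeasurableSpace Ω] (μ : Measure Ω)
    [IsProbabilityMeasure μ] (A : ℕ → Set Ω) (hA : ∀ i, MeasurableSet (A i))
    (hsum : ∑' i, μ (A i) = ⊤) :
    atTop.limsup (fun n =>
        (∑ i ∈ Finset.range n, μ (A i)) ^ 2 /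
          (∑ i ∈ Finset.range n, ∑ j ∈ Finset.range n, μ (A i ∩ A j))) ≤
      μ (Filter.limsup A atTop) := by
  rw [measure_limsup_atTop_eq_iInf_measure_iUnion_ge μ fun i => (hA i).nullMeasurableSet]
  refine le_iInf fun m => ?_
  have h_head : ∑ i ∈ Finset.range m, μ (A i) ≠ ∞ :=
    ENNReal.sum_ne_top.2 fun i _ => measure_ne_top μ (A i)
  refine limsup_sq_div_le_of_tendsto_top h_head (hsum ▸ ENNReal.tendsto_nat_tsum _) ?_
  filter_upwards [eventually_ge_atTop m] with n hmn
  rw [← Finset.sum_range_add_sum_Ico (fun i => μ (A i)) hmn,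
    ENNReal.add_sub_cancel_left h_head]
  calc (∑ i ∈ Finset.Ico m n, μ (A i)) ^ 2
      ≤ (∑ i ∈ Finset.Ico m n, ∑ j ∈ Finset.Ico m n, μ (A i ∩ A j)) *
          μ (⋃ i ∈ Finset.Ico m n, A i) :=
        sq_sum_measure_le_sum_measure_inter_mul_measure_biUnion μ hA _
    _ ≤ (∑ i ∈ Finset.range n, ∑ j ∈ Finset.range n, μ (A i ∩ A j)) * μ (⋃ i ≥ m, A i) := by
        have h_sub : Finset.Ico m n ⊆ Finset.range n := fun i hi =>
          Finset.mem_range.2 (Finset.mem_Ico.1 hi).2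
        gcongr with i
        · exact (Finset.sum_le_sum fun i _ => Finset.sum_le_sum_of_subset h_sub).trans
            (Finset.sum_le_sum_of_subset h_sub)
        · exact iUnion_mono' fun hi => ⟨(Finset.mem_Ico.1 hi).1, subset_rfl⟩
end

section
/- Let (A_i)_{i≥1} be events in a probability space with P(A_i) = c > 0 for all i, and suppose P(A_i ∩ A_j) ≤ c²(1+2^{-i})(1+2^{-j}) for all i ≠ j. Then almost surely infinitely many of the events A_i occur. -/
/-!
By the Chung–Erdős inequality (Cauchy–Schwarz for `N = ∑ i ∈ s, 𝟙_{A i}` on its support),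
`P(⋃ i ∈ s, A i) ≥ (∑ P(A i))² / ∑ ∑ P(A i ∩ A j)`. For a block `s` of `m` consecutive indices
the numerator is `(m c)²`, and since `∑ 2^{-i} ≤ 2` the denominator is at most
`m c + (c (m + 2))²`. The ratio tends to `1` as `m → ∞`, so every tail union `⋃ i ≥ n, A i`
has full measure, and hence so does `limsup A`.
-/

open MeasureTheory Filter
open scoped ENNReal

theorem sum_two_rpow_neg_le_two (s : Finset ℕ) : ∑ i ∈ s, (2 : ℝ) ^ (-(i : ℝ)) ≤ 2 := by
  have h : ∀ i : ℕ, (2 : ℝ) ^ (-(i : ℝ)) = (1 / 2) ^ i := fun i => by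
    rw [Real.rpow_neg zero_le_two, Real.rpow_natCast, one_div, inv_pow]
  simp only [h]
  exact (summable_geometric_two.sum_le_tsum s fun i _ => by positivity).trans_eq
    tsum_geometric_two

theorem tendsto_sq_div_add_sq (c : ℝ) (hc : 0 < c) :
    Tendsto (fun m : ℕ => ((m : ℝ) * c) ^ 2 / (m * c + (c * (m + 2)) ^ 2)) atTop (nhds 1) := by
  have hden : Tendsto (fun m : ℕ => c / m + (1 + 2 / (m : ℝ)) ^ 2 * c ^ 2) atTop
      (nhds (0 + (1 + 0) ^ 2 * c ^ 2)) :=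
    (tendsto_const_div_atTop_nhds_zero_nat c).add
      (((tendsto_const_nhds.add (tendsto_const_div_atTop_nhds_zero_nat 2)).pow 2).mul_const _)
  have hlim : Tendsto (fun m : ℕ => c ^ 2 / (c / m + (1 + 2 / (m : ℝ)) ^ 2 * c ^ 2)) atTop
      (nhds (c ^ 2 / (0 + (1 + 0) ^ 2 * c ^ 2))) := tendsto_const_nhds.div hden (by positivity)
  rw [zero_add, add_zero, one_pow, one_mul, div_self (by positivity)] at hlim
  refine hlim.congr' ?_
  filter_upwards [eventually_ne_atTop 0] with m hm
  field_simp

section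

variable {Ω : Type*} [MeasurableSpace Ω] {μ : Measure Ω}

theorem lintegral_sq_le_measure_mul_lintegral_sq {f : Ω → ℝ≥0∞} (hf : AEMeasurable f μ)
    {U : Set Ω} (hU : MeasurableSet U) (hfU : ∀ x ∉ U, f x = 0) :
    (∫⁻ x, f x ∂μ) ^ 2 ≤ μ U * ∫⁻ x, f x ^ 2 ∂μ := by
  have hf_eq : f = f * U.indicator 1 := by
    ext x
    by_cases hx : x ∈ U <;> simp [hx, hfU]
  have hU_sq : ∫⁻ x, U.indicator (1 : Ω → ℝ≥0∞) x ^ (2 : ℝ) ∂μ = μ U := by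
    rw [← lintegral_indicator_one hU]
    congr 1 with x
    by_cases hx : x ∈ U <;> simp [hx]
  have holder := ENNReal.lintegral_mul_le_Lp_mul_Lq μ Real.HolderConjugate.two_two hf
    ((measurable_one.indicator hU).aemeasurable)
  rw [← hf_eq, hU_sq] at holder
  simp only [ENNReal.rpow_two] at holder
  calc (∫⁻ x, f x ∂μ) ^ 2
      ≤ ((∫⁻ x, f x ^ 2 ∂μ) ^ (1 / 2 : ℝ) * μ U ^ (1 / 2 : ℝ)) ^ 2 := by gcongr
    _ = μ U * ∫⁻ x, f x ^ 2 ∂μ := by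
      rw [mul_pow, ← ENNReal.rpow_natCast, ← ENNReal.rpow_natCast, ← ENNReal.rpow_mul,
        ← ENNReal.rpow_mul]
      norm_num [mul_comm]

section

variable {ι : Type*} {A : ι → Set Ω}

theorem lintegral_sum_indicator_one (hA : ∀ i, MeasurableSet (A i)) (s : Finset ι) :
    ∫⁻ x, ∑ i ∈ s, (A i).indicator 1 x ∂μ = ∑ i ∈ s, μ (A i) := by
  rw [lintegral_finsetSum _ fun i _ => measurable_one.indicator (hA i)]
  simp only [lintegral_indicator_one (hA _)]

theorem lintegral_sq_sum_indicator_one (hA : ∀ i, MeasurableSet (A i)) (s : Finset ι) :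
    ∫⁻ x, (∑ i ∈ s, (A i).indicator 1 x) ^ 2 ∂μ = ∑ i ∈ s, ∑ j ∈ s, μ (A i ∩ A j) := by
  have hsq : ∀ x, (∑ i ∈ s, (A i).indicator (1 : Ω → ℝ≥0∞) x) ^ 2
      = ∑ i ∈ s, ∑ j ∈ s, (A i ∩ A j).indicator 1 x := fun x => by
    simp only [sq, Finset.sum_mul_sum, Set.inter_indicator_one, Pi.mul_apply]
  simp only [hsq]
  rw [lintegral_finsetSum _ fun i _ => Finset.measurable_sum _ fun j _ =>
    measurable_one.indicator ((hA i).inter (hA j))]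
  refine Finset.sum_congr rfl fun i _ => ?_
  rw [lintegral_finsetSum _ fun j _ => measurable_one.indicator ((hA i).inter (hA j))]
  simp only [lintegral_indicator_one ((hA _).inter (hA _))]

theorem sq_sum_measure_le_measure_biUnion_mul (hA : ∀ i, MeasurableSet (A i)) (s : Finset ι) :
    (∑ i ∈ s, μ (A i)) ^ 2 ≤ μ (⋃ i ∈ s, A i) * ∑ i ∈ s, ∑ j ∈ s, μ (A i ∩ A j) := by
  rw [← lintegral_sum_indicator_one hA, ← lintegral_sq_sum_indicator_one hA]
  refine lintegral_sq_le_measure_mul_lintegral_sq ?_ (s.measurableSet_biUnion fun i _ => hA i) ?_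
  · exact (Finset.measurable_sum _ fun i _ => measurable_one.indicator (hA i)).aemeasurable
  · intro x hx
    refine Finset.sum_eq_zero fun i hi => Set.indicator_of_notMem (fun h => hx ?_) _
    exact Set.mem_biUnion hi h

end

variable {A : ℕ → Set Ω}

theorem measure_limsup_eq_one_of_forall_measure_iUnion_eq_one [IsProbabilityMeasure μ]
    (hA : ∀ i, MeasurableSet (A i)) (h : ∀ n, μ (⋃ i ≥ n, A i) = 1) :
    μ (limsup A atTop) = 1 := by
  have hT : ∀ n, MeasurableSet (⋃ i ≥ n, A i) := fun n =>
    MeasurableSet.iUnion fun i => MeasurableSet.iUnion fun _ => hA i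
  rw [limsup_eq_iInf_iSup_of_nat]
  change μ (⋂ n, ⋃ i ≥ n, A i) = 1
  rw [← prob_compl_eq_zero_iff (MeasurableSet.iInter hT), Set.compl_iInter]
  exact measure_iUnion_null fun n => (prob_compl_eq_zero_iff (hT n)).2 (h n)

theorem sum_sum_measure_inter_le {c : ℝ} (hc : 0 ≤ c)
    (hmeas : ∀ i, μ (A i) = ENNReal.ofReal c)
    (hpair : ∀ i j : ℕ, i ≠ j →
      μ (A i ∩ A j) ≤ ENNReal.ofReal (c ^ 2 * (1 + 2 ^ (-(i : ℝ))) * (1 + 2 ^ (-(j : ℝ)))))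
    (s : Finset ℕ) :
    ∑ i ∈ s, ∑ j ∈ s, μ (A i ∩ A j) ≤ ENNReal.ofReal (s.card * c + (c * (s.card + 2)) ^ 2) := by
  set b : ℕ → ℝ := fun i => c * (1 + 2 ^ (-(i : ℝ))) with hb
  have hb_nonneg : ∀ i, 0 ≤ b i := fun i => by positivity
  have hterm : ∀ i j, μ (A i ∩ A j) ≤
      (if i = j then ENNReal.ofReal c else 0) + ENNReal.ofReal (b i) * ENNReal.ofReal (b j) := by
    intro i j
    rw [← ENNReal.ofReal_mul (hb_nonneg i)]
    rcases eq_or_ne i j with rfl | hij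
    · simp [hmeas]
    · rw [if_neg hij, zero_add]
      exact (hpair i j hij).trans_eq (congrArg ENNReal.ofReal (by ring))
  have hsum_b : ∑ i ∈ s, b i ≤ c * (s.card + 2) := by
    rw [hb, ← Finset.mul_sum, Finset.sum_add_distrib]
    have := sum_two_rpow_neg_le_two s
    simp only [Finset.sum_const, nsmul_eq_mul, mul_one]
    gcongr
  calc ∑ i ∈ s, ∑ j ∈ s, μ (A i ∩ A j)
      ≤ ∑ i ∈ s, ∑ j ∈ s,
          ((if i = j then ENNReal.ofReal c else 0) + ENNReal.ofReal (b i) * ENNReal.ofReal (b j)) :=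
        Finset.sum_le_sum fun i _ => Finset.sum_le_sum fun j _ => hterm i j
    _ = s.card * ENNReal.ofReal c + ENNReal.ofReal (∑ i ∈ s, b i) ^ 2 := by
        simp only [Finset.sum_add_distrib, Finset.sum_ite_eq, ← Finset.sum_mul_sum, ← sq,
          ENNReal.ofReal_sum_of_nonneg fun i _ => hb_nonneg i]
        simp
    _ ≤ ENNReal.ofReal (s.card * c + (c * (s.card + 2)) ^ 2) := by
        rw [ENNReal.ofReal_add (by positivity) (by positivity), ENNReal.ofReal_mul (by positivity),
          ENNReal.ofReal_natCast, ENNReal.ofReal_pow (by positivity)]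
        gcongr

theorem ofReal_sq_div_le_measure_biUnion_Ico (hA : ∀ i, MeasurableSet (A i))
    {c : ℝ} (hc : 0 < c) (hmeas : ∀ i, μ (A i) = ENNReal.ofReal c)
    (hpair : ∀ i j : ℕ, i ≠ j →
      μ (A i ∩ A j) ≤ ENNReal.ofReal (c ^ 2 * (1 + 2 ^ (-(i : ℝ))) * (1 + 2 ^ (-(j : ℝ)))))
    (n m : ℕ) :
    ENNReal.ofReal ((m * c) ^ 2 / (m * c + (c * (m + 2)) ^ 2)) ≤
      μ (⋃ i ∈ Finset.Ico n (n + m), A i) := by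
  have hcard : (Finset.Ico n (n + m)).card = m := by simp
  have hsum : ∑ i ∈ Finset.Ico n (n + m), μ (A i) = ENNReal.ofReal (m * c) := by
    simp [hmeas, hcard, ENNReal.ofReal_mul]
  have hinter := sum_sum_measure_inter_le hc.le hmeas hpair (Finset.Ico n (n + m))
  rw [hcard] at hinter
  rw [ENNReal.ofReal_div_of_pos (by positivity), ENNReal.ofReal_pow (by positivity), ← hsum]
  exact ENNReal.div_le_of_le_mul
    ((sq_sum_measure_le_measure_biUnion_mul hA _).trans (by gcongr))

end

/-- Almost-independent Borel–Cantelli: if all events have the same probability `c > 0`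
and `P(A_i ∩ A_j) ≤ c²(1+2^{-i})(1+2^{-j})` for `i ≠ j`, then almost surely infinitely
many of the events occur. -/
theorem borelCantelli_almost_independent {Ω : Type*} [MeasurableSpace Ω] (μ : Measure Ω)
    [IsProbabilityMeasure μ] (A : ℕ → Set Ω) (hA : ∀ i, MeasurableSet (A i))
    (c : ℝ) (hc : 0 < c) (hmeas : ∀ i, μ (A i) = ENNReal.ofReal c)
    (hpair : ∀ i j : ℕ, i ≠ j →
      μ (A i ∩ A j) ≤ ENNReal.ofReal (c ^ 2 * (1 + 2 ^ (-(i : ℝ))) * (1 + 2 ^ (-(j : ℝ))))) :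
    μ (Filter.limsup A atTop) = 1 := by
  refine measure_limsup_eq_one_of_forall_measure_iUnion_eq_one hA fun n =>
    le_antisymm prob_le_one ?_
  have hlim := ENNReal.tendsto_ofReal (tendsto_sq_div_add_sq c hc)
  rw [ENNReal.ofReal_one] at hlim
  refine le_of_tendsto' hlim fun m =>
    (ofReal_sq_div_le_measure_biUnion_Ico hA hc hmeas hpair n m).trans (measure_mono ?_)
  exact Set.iUnion₂_subset fun i hi =>
    Set.subset_iUnion₂_of_subset i (Finset.mem_Ico.1 hi).1 le_rfl
end

section
/- Let A ⊆ ℝ be a dense subgroup and let W ⊆ ℝ² be a Lebesgue measurable set of finite measure. Then for Lebesgue-almost every (t, t') ∈ W, the set {u ∈ A : (t+u, t'−u) ∈ W} is infinite. -/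
/-! Translation by `(u, -u)` is continuous in measure, so `μ ((W - (u, -u)) ∆ W) → 0` as
`u → 0`. Density of `A` yields distinct `u₀ > u₁ > ⋯` in `A` along which these measures are
summable, and by Borel–Cantelli almost every `p ∈ W` has `p + (uₙ, -uₙ) ∈ W` for all large `n`. -/

open MeasureTheory Filter Set
open scoped Topology symmDiff ENNReal

theorem tendsto_measure_preimage_add_right_symmDiff {G : Type*} [AddGroup G] [TopologicalSpace G]
    [IsTopologicalAddGroup G] [MeasurableSpace G] [BorelSpace G] {μ : Measure G}
    [μ.IsAddRightInvariant] [μ.InnerRegularCompactLTTop] [IsLocallyFiniteMeasure μ] {s : Set G}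
    (hs : NullMeasurableSet s μ) (hμs : μ s ≠ ∞) :
    Tendsto (fun g ↦ μ (((· + g) ⁻¹' s) ∆ s)) (𝓝 0) (𝓝 0) := by
  let F : G → C(G, G) := fun g ↦ ⟨(· + g), continuous_add_const g⟩
  have hF : Continuous F :=
    ContinuousMap.continuous_of_continuous_uncurry _ (continuous_snd.add continuous_fst)
  have hF_lim : Tendsto F (𝓝 0) (𝓝 (ContinuousMap.id G)) := by
    convert hF.tendsto 0
    ext; simp [F]
  have hF_mp : ∀ g, MeasurePreserving (F g) μ μ := fun g ↦ measurePreserving_add_right μ g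
  exact (tendsto_measure_symmDiff_preimage_nhds_zero hF_lim (.of_forall hF_mp) (.id μ) hs hμs :)

theorem ENNReal.exists_strictMono_tsum_comp_ne_top {f : ℕ → ℝ≥0∞}
    (hf : Tendsto f atTop (𝓝 0)) : ∃ φ : ℕ → ℕ, StrictMono φ ∧ ∑' n, f (φ n) ≠ ∞ := by
  have hsmall : ∀ n, ∀ᶠ k in atTop, f k < 2⁻¹ ^ n := fun n ↦
    hf.eventually_lt_const (ENNReal.pow_pos (ENNReal.inv_pos.2 ENNReal.ofNat_ne_top) n)
  obtain ⟨φ, hφ, hφf⟩ := extraction_forall_of_eventually hsmall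
  refine ⟨φ, hφ, ne_top_of_le_ne_top ?_ (ENNReal.tsum_le_tsum fun n ↦ (hφf n).le)⟩
  simp [ENNReal.tsum_geometric, ENNReal.one_sub_inv_two]

theorem Dense.exists_seq_strictAnti_tsum_ne_top {α : Type*} [TopologicalSpace α] [LinearOrder α]
    [OrderTopology α] [DenselyOrdered α] [NoMaxOrder α] [FirstCountableTopology α] {s : Set α}
    (hs : Dense s) {x : α} {f : α → ℝ≥0∞} (hf : Tendsto f (𝓝 x) (𝓝 0)) :
    ∃ u : ℕ → α, StrictAnti u ∧ (∀ n, u n ∈ s) ∧ ∑' n, f (u n) ≠ ∞ := by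
  obtain ⟨u, hu_anti, hu_mem, hu_lim⟩ := hs.exists_seq_strictAnti_tendsto x
  obtain ⟨φ, hφ, hφf⟩ := ENNReal.exists_strictMono_tsum_comp_ne_top (hf.comp hu_lim)
  exact ⟨u ∘ φ, hu_anti.comp_strictMono hφ, fun n ↦ (hu_mem _).2, hφf⟩

theorem ae_restrict_eventually_mem_of_tsum_measure_symmDiff_ne_top {α : Type*}
    [MeasurableSpace α] {μ : Measure α} {s : Set α} (hs : MeasurableSet s) {T : ℕ → α → α}
    (hT : ∑' n, μ ((T n ⁻¹' s) ∆ s) ≠ ∞) :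
    ∀ᵐ x ∂μ.restrict s, ∀ᶠ n in atTop, T n x ∈ s := by
  filter_upwards [ae_restrict_of_ae (ae_eventually_notMem hT), ae_restrict_mem hs]
    with x hx hxs
  exact hx.mono fun n hn ↦ by_contra fun hTx ↦ hn (Or.inr ⟨hxs, hTx⟩)

/-- If `A ⊆ ℝ` is a dense subgroup and `W ⊆ ℝ²` is measurable of finite measure, then for
Lebesgue-almost every `(t, t') ∈ W`, the set `{u ∈ A : (t+u, t'−u) ∈ W}` is infinite. -/
theorem dense_subgroup_translates_infinite (A : AddSubgroup ℝ) (hA : Dense (A : Set ℝ))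
    (W : Set (ℝ × ℝ)) (hW : MeasurableSet W) (hWfin : volume W ≠ ⊤) :
    ∀ᵐ p ∂(volume.restrict W),
      {u : ℝ | u ∈ A ∧ (p.1 + u, p.2 - u) ∈ W}.Infinite := by
  let τ : ℝ → ℝ × ℝ → ℝ × ℝ := fun u p ↦ (p.1 + u, p.2 - u)
  have hτ : Tendsto (fun u ↦ volume ((τ u ⁻¹' W) ∆ W)) (𝓝 0) (𝓝 0) := by
    have hdiag : Tendsto (fun u : ℝ ↦ ((u, -u) : ℝ × ℝ)) (𝓝 0) (𝓝 0) :=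
      (continuous_id.prodMk continuous_neg).tendsto' 0 0 (by simp)
    have hτ_eq : ∀ u, τ u = (· + ((u, -u) : ℝ × ℝ)) := fun u ↦ by
      ext p <;> simp [τ, sub_eq_add_neg]
    simp only [hτ_eq]
    exact (tendsto_measure_preimage_add_right_symmDiff hW.nullMeasurableSet hWfin).comp hdiag
  obtain ⟨v, hv_anti, hvA, hv_sum⟩ := hA.exists_seq_strictAnti_tsum_ne_top hτ
  filter_upwards [ae_restrict_eventually_mem_of_tsum_measure_symmDiff_ne_top hW hv_sum]
    with p hp
  obtain ⟨N, hN⟩ := eventually_atTop.1 hp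
  exact infinite_of_injective_forall_mem (hv_anti.injective.comp (add_right_injective N))
    fun k ↦ ⟨hvA (N + k), hN (N + k) (Nat.le_add_right N k)⟩
end

section
/- Let ρ be a nonzero linear functional on a finite-dimensional Euclidean space 𝔞 of dimension d, with dual unit vector ρ̂ (so ρ(X) = ‖ρ‖⟨ρ̂, X⟩). Then ∫_{‖X‖ ≤ t} e^{2ρ(X)} dX is asymptotically equivalent, as t → ∞, to C · e^{2‖ρ‖t} t^{(d−1)/2} for some constant C > 0. -/
/-!
Rotating `𝔞` so that `ρ = ‖ρ‖ ⟨e₀, ·⟩`, the integral becomes `∫_{‖Y‖ ≤ t} e^{c Y₀} dY` with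
`c = 2‖ρ‖`. Slicing the ball orthogonally to `e₀` (Fubini) gives
`κ ∫_{-t}^{t} e^{c s} (t² - s²)^{n/2} ds`, where `d = n + 1` and `κ` is the volume of the unit
ball of `ℝⁿ`. Substituting `s = t - u` turns this into
`κ e^{c t} t^{n/2} ∫_0^{2t} e^{-c u} (u (2 - u/t))^{n/2} du`, and by dominated convergence the
last integral tends to `∫_0^∞ e^{-c u} (2u)^{n/2} du = 2^{n/2} Γ(n/2 + 1) / c^{n/2 + 1}`.
-/

open MeasureTheory Filter Set Real
open scoped Topology

theorem OrthonormalBasis.exists_apply_eq_norm_mul_repr_zero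
    {E : Type*} [NormedAddCommGroup E] [InnerProductSpace ℝ E] [FiniteDimensional ℝ E]
    {n : ℕ} (hE : Module.finrank ℝ E = n + 1) {ρ : E →L[ℝ] ℝ} (hρ : ρ ≠ 0) :
    ∃ b : OrthonormalBasis (Fin (n + 1)) ℝ E, ∀ X, ρ X = ‖ρ‖ * b.repr X 0 := by
  set v := (InnerProductSpace.toDual ℝ E).symm ρ
  have hρ0 : ‖ρ‖ ≠ 0 := norm_ne_zero_iff.mpr hρ
  have hw : Orthonormal ℝ (({0} : Set (Fin (n + 1))).domRestrict fun _ ↦ ‖ρ‖⁻¹ • v) := by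
    refine ⟨fun _ ↦ ?_, fun i j hij ↦ absurd (Subsingleton.elim i j) hij⟩
    rw [Set.domRestrict_apply, norm_smul, norm_inv, norm_norm, LinearIsometryEquiv.norm_map,
      inv_mul_cancel₀ hρ0]
  obtain ⟨b, hb⟩ := hw.exists_orthonormalBasis_extension_of_card_eq (by simpa using hE)
  refine ⟨b, fun X ↦ ?_⟩
  rw [b.repr_apply_apply, hb 0 rfl, real_inner_smul_left, InnerProductSpace.toDual_symm_apply,
    mul_inv_cancel_left₀ hρ0]

theorem LinearIsometryEquiv.setIntegral_closedBall_zero_comp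
    {E F : Type*} [NormedAddCommGroup E] [InnerProductSpace ℝ E] [FiniteDimensional ℝ E]
    [MeasurableSpace E] [BorelSpace E] [NormedAddCommGroup F] [InnerProductSpace ℝ F]
    [FiniteDimensional ℝ F] [MeasurableSpace F] [BorelSpace F]
    (e : E ≃ₗᵢ[ℝ] F) (g : F → ℝ) (t : ℝ) :
    ∫ x in Metric.closedBall 0 t, g (e x) = ∫ y in Metric.closedBall 0 t, g y := by
  simpa using e.measurePreserving.setIntegral_preimage_emb
    e.toHomeomorph.measurableEmbedding g (Metric.closedBall 0 t)

theorem Metric.measureReal_ball_pos {X : Type*} [PseudoMetricSpace X] [ProperSpace X]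
    [MeasurableSpace X] [OpensMeasurableSpace X] (μ : Measure X) [μ.IsOpenPosMeasure]
    [IsFiniteMeasureOnCompacts μ] (x : X) {r : ℝ} (hr : 0 < r) : 0 < μ.real (Metric.ball x r) :=
  ENNReal.toReal_pos (Metric.measure_ball_pos μ x hr).ne' measure_ball_lt_top.ne

theorem volume_setOf_sum_sq_le (n : ℕ) {c : ℝ} (hc : 0 ≤ c) :
    volume {y : Fin n → ℝ | ∑ i, y i ^ 2 ≤ c} =
      ENNReal.ofReal (√c ^ n) * volume (Metric.ball (0 : EuclideanSpace ℝ (Fin n)) 1) := by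
  have hball : (MeasurableEquiv.toLp 2 (Fin n → ℝ)).symm ⁻¹' {y | ∑ i, y i ^ 2 ≤ c} =
      Metric.closedBall 0 √c := by
    rw [EuclideanSpace.closedBall_zero_eq _ (sqrt_nonneg c), sq_sqrt hc]
    rfl
  rw [← (EuclideanSpace.volume_preserving_symm_measurableEquiv_toLp (Fin n)).measure_preimage
    (by measurability), hball, Measure.addHaar_closedBall _ _ (sqrt_nonneg c),
    finrank_euclideanSpace_fin]

theorem integral_indicator_setOf_sq_add_sum_sq_le (n : ℕ) (f : ℝ → ℝ) {t : ℝ} (ht : 0 ≤ t)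
    (s : ℝ) :
    ∫ y : Fin n → ℝ, {p : ℝ × (Fin n → ℝ) | p.1 ^ 2 + ∑ j, p.2 j ^ 2 ≤ t ^ 2}.indicator
        (fun p ↦ f p.1) (s, y) =
      (Icc (-t) t).indicator (fun s ↦ volume.real (Metric.ball (0 : EuclideanSpace ℝ (Fin n)) 1) *
        (f s * √(t ^ 2 - s ^ 2) ^ n)) s := by
  have hslice : ∀ y : Fin n → ℝ,
      {p : ℝ × (Fin n → ℝ) | p.1 ^ 2 + ∑ j, p.2 j ^ 2 ≤ t ^ 2}.indicator (fun p ↦ f p.1) (s, y) =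
        {y : Fin n → ℝ | ∑ j, y j ^ 2 ≤ t ^ 2 - s ^ 2}.indicator (fun _ ↦ f s) y := by
    intro y
    simp only [indicator, mem_ofPred_eq, le_sub_iff_add_le']
  rw [integral_congr_ae (.of_forall hslice), integral_indicator_const _ (by measurability)]
  by_cases hs : s ∈ Icc (-t) t
  · have hs' : 0 ≤ t ^ 2 - s ^ 2 := by nlinarith [hs.1, hs.2]
    rw [indicator_of_mem hs, measureReal_def, volume_setOf_sum_sq_le n hs', ENNReal.toReal_mul,
      ENNReal.toReal_ofReal (by positivity), smul_eq_mul, ← measureReal_def]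
    ring
  · have hempty : {y : Fin n → ℝ | ∑ j, y j ^ 2 ≤ t ^ 2 - s ^ 2} = ∅ := by
      have hts : t ^ 2 < s ^ 2 := by
        simp only [mem_Icc, not_and_or, not_le] at hs
        rcases hs with h | h <;> nlinarith
      exact eq_empty_of_forall_notMem fun y hy ↦
        (Finset.sum_nonneg fun j _ ↦ sq_nonneg (y j)).not_gt (by linarith [hy.out])
    rw [indicator_of_notMem hs, hempty, measureReal_empty, zero_smul]

theorem EuclideanSpace.setIntegral_closedBall_apply_zero (n : ℕ) {f : ℝ → ℝ} (hf : Continuous f)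
    {t : ℝ} (ht : 0 ≤ t) :
    ∫ Y in Metric.closedBall (0 : EuclideanSpace ℝ (Fin (n + 1))) t, f (Y 0) =
      volume.real (Metric.ball (0 : EuclideanSpace ℝ (Fin n)) 1) *
        ∫ s in Icc (-t) t, f s * √(t ^ 2 - s ^ 2) ^ n := by
  let e : EuclideanSpace ℝ (Fin (n + 1)) ≃ᵐ ℝ × (Fin n → ℝ) :=
    (MeasurableEquiv.toLp 2 _).symm.trans (MeasurableEquiv.piFinSuccAbove (fun _ ↦ ℝ) 0)
  have he : MeasurePreserving e :=
    (EuclideanSpace.volume_preserving_symm_measurableEquiv_toLp _).trans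
      (volume_preserving_piFinSuccAbove _ 0)
  set T := {p : ℝ × (Fin n → ℝ) | p.1 ^ 2 + ∑ j, p.2 j ^ 2 ≤ t ^ 2}
  have hT : MeasurableSet T := by measurability
  have hball : e ⁻¹' T = Metric.closedBall 0 t := by
    rw [EuclideanSpace.closedBall_zero_eq _ ht]
    ext Y
    simp [T, e, Fin.sum_univ_succ, Fin.tail]
  have hint : IntegrableOn (fun p : ℝ × (Fin n → ℝ) ↦ f p.1) T := by
    rw [← he.integrableOn_comp_preimage e.measurableEmbedding, hball]
    exact (hf.comp (EuclideanSpace.proj 0).continuous).continuousOn.integrableOn_compact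
      (isCompact_closedBall _ _)
  calc ∫ Y in Metric.closedBall (0 : EuclideanSpace ℝ (Fin (n + 1))) t, f (Y 0)
      = ∫ p in T, f p.1 := by
        rw [← hball]
        exact he.setIntegral_preimage_emb e.measurableEmbedding (fun p ↦ f p.1) T
    _ = ∫ s, ∫ y, T.indicator (fun p ↦ f p.1) (s, y) := by
        rw [← integral_indicator hT, Measure.volume_eq_prod]
        exact integral_prod _ ((integrable_indicator_iff hT).mpr hint)
    _ = _ := by
        rw [integral_congr_ae (.of_forall (integral_indicator_setOf_sq_add_sum_sq_le n f ht)),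
          integral_indicator measurableSet_Icc, integral_const_mul]

theorem setIntegral_Icc_exp_mul_sqrt_pow (n : ℕ) (c : ℝ) {t : ℝ} (ht : 0 < t) :
    ∫ s in Icc (-t) t, exp (c * s) * √(t ^ 2 - s ^ 2) ^ n =
      exp (c * t) * t ^ ((n : ℝ) / 2) *
        ∫ u in 0..2 * t, exp (-c * u) * (u * (2 - u / t)) ^ ((n : ℝ) / 2) := by
  have hsub := intervalIntegral.integral_comp_sub_left
    (fun s ↦ exp (c * s) * √(t ^ 2 - s ^ 2) ^ n) (a := 0) (b := 2 * t) t
  rw [show t - 2 * t = -t by ring, sub_zero] at hsub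
  rw [integral_Icc_eq_integral_Ioc, ← intervalIntegral.integral_of_le (by linarith), ← hsub,
    ← intervalIntegral.integral_const_mul]
  refine intervalIntegral.integral_congr fun u hu ↦ ?_
  rw [uIcc_of_le (by linarith)] at hu
  have hu' : 0 ≤ u * (2 - u / t) :=
    mul_nonneg hu.1 (by rw [sub_nonneg, div_le_iff₀ ht]; linarith [hu.2])
  have hsq : t ^ 2 - (t - u) ^ 2 = t * (u * (2 - u / t)) := by field_simp; ring
  rw [hsq, ← rpow_natCast, ← rpow_div_two_eq_sqrt _ (mul_nonneg ht.le hu'), mul_rpow ht.le hu',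
    show c * (t - u) = c * t + -c * u by ring, exp_add]
  ring

theorem integrableOn_Ioi_exp_neg_mul_mul_rpow {c q : ℝ} (hc : 0 < c) (hq : -1 < q) :
    IntegrableOn (fun u ↦ exp (-c * u) * (2 * u) ^ q) (Ioi 0) := by
  refine IntegrableOn.congr_fun ((integrableOn_rpow_mul_exp_neg_mul_rpow hq one_pos hc).const_mul
    (2 ^ q)) (fun u (hu : 0 < u) ↦ ?_) measurableSet_Ioi
  rw [rpow_one, mul_rpow zero_le_two hu.le]
  ring

theorem integral_Ioi_exp_neg_mul_mul_rpow {c q : ℝ} (hc : 0 < c) (hq : -1 < q) :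
    ∫ u in Ioi 0, exp (-c * u) * (2 * u) ^ q = 2 ^ q * Gamma (q + 1) / c ^ (q + 1) := by
  have hGamma := integral_rpow_mul_exp_neg_mul_Ioi (a := q + 1) (by linarith) hc
  rw [add_sub_cancel_right, one_div, inv_rpow hc.le] at hGamma
  rw [mul_div_assoc, div_eq_inv_mul, ← hGamma, ← integral_const_mul]
  refine setIntegral_congr_fun measurableSet_Ioi fun u (hu : 0 < u) ↦ ?_
  rw [mul_rpow zero_le_two hu.le, neg_mul]
  ring

theorem tendsto_intervalIntegral_exp_neg_mul_mul_rpow {c q : ℝ} (hc : 0 < c) (hq : 0 ≤ q) :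
    Tendsto (fun t ↦ ∫ u in 0..2 * t, exp (-c * u) * (u * (2 - u / t)) ^ q) atTop
      (𝓝 (∫ u in Ioi 0, exp (-c * u) * (2 * u) ^ q)) := by
  have hF : ∀ᶠ t in atTop, ∫ u in Ioi 0,
      (Ioc 0 (2 * t)).indicator (fun u ↦ exp (-c * u) * (u * (2 - u / t)) ^ q) u =
        ∫ u in 0..2 * t, exp (-c * u) * (u * (2 - u / t)) ^ q := by
    filter_upwards [eventually_ge_atTop 0] with t ht
    rw [setIntegral_indicator measurableSet_Ioc, inter_eq_self_of_subset_right Ioc_subset_Ioi_self,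
      intervalIntegral.integral_of_le (by linarith)]
  refine (tendsto_integral_filter_of_dominated_convergence _ (.of_forall fun t ↦ ?_) ?_
    (integrableOn_Ioi_exp_neg_mul_mul_rpow hc (by linarith)) ?_).congr' hF
  · exact (Measurable.indicator (by fun_prop) measurableSet_Ioc).aestronglyMeasurable
  · filter_upwards [eventually_gt_atTop 0] with t ht
    filter_upwards [ae_restrict_mem measurableSet_Ioi] with u (hu : 0 < u)
    by_cases hut : u ∈ Ioc 0 (2 * t)
    · have hbase : 0 ≤ u * (2 - u / t) :=
        mul_nonneg hu.le (by rw [sub_nonneg, div_le_iff₀ ht]; linarith [hut.2])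
      rw [indicator_of_mem hut, norm_of_nonneg (by positivity)]
      gcongr exp _ * ?_ ^ q
      nlinarith [div_nonneg hu.le ht.le]
    · rw [indicator_of_notMem hut, norm_zero]
      positivity
  · filter_upwards [ae_restrict_mem measurableSet_Ioi] with u (hu : 0 < u)
    have hlim : Tendsto (fun t ↦ exp (-c * u) * (u * (2 - u / t)) ^ q) atTop
        (𝓝 (exp (-c * u) * (2 * u) ^ q)) := by
      have : Tendsto (fun t ↦ u * (2 - u / t)) atTop (𝓝 (u * (2 - 0))) :=
        (tendsto_const_nhds.sub (tendsto_const_nhds.div_atTop tendsto_id)).const_mul u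
      rw [sub_zero, mul_comm u] at this
      exact (this.rpow_const (Or.inr hq)).const_mul _
    refine hlim.congr' ?_
    filter_upwards [eventually_ge_atTop u] with t hut
    rw [indicator_of_mem (show u ∈ Ioc 0 (2 * t) from ⟨hu, by linarith⟩)]

theorem EuclideanSpace.tendsto_setIntegral_closedBall_exp_mul_apply_zero_div (n : ℕ) {c : ℝ}
    (hc : 0 < c) :
    Tendsto (fun t ↦
        (∫ Y in Metric.closedBall (0 : EuclideanSpace ℝ (Fin (n + 1))) t, exp (c * Y 0)) /
          (volume.real (Metric.ball (0 : EuclideanSpace ℝ (Fin n)) 1) *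
            (2 ^ ((n : ℝ) / 2) * Gamma ((n : ℝ) / 2 + 1) / c ^ ((n : ℝ) / 2 + 1)) *
            exp (c * t) * t ^ ((n : ℝ) / 2))) atTop (𝓝 1) := by
  set L := 2 ^ ((n : ℝ) / 2) * Gamma ((n : ℝ) / 2 + 1) / c ^ ((n : ℝ) / 2 + 1)
  have hL : 0 < L := by positivity
  have hlim := (tendsto_intervalIntegral_exp_neg_mul_mul_rpow hc (q := (n : ℝ) / 2)
    (by positivity)).div_const L
  rw [integral_Ioi_exp_neg_mul_mul_rpow hc (by linarith [show (0 : ℝ) ≤ n / 2 by positivity]),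
    div_self hL.ne'] at hlim
  refine hlim.congr' ?_
  filter_upwards [eventually_gt_atTop 0] with t ht
  have hball := EuclideanSpace.setIntegral_closedBall_apply_zero n
    (f := fun s ↦ exp (c * s)) (by fun_prop) ht.le
  rw [hball, setIntegral_Icc_exp_mul_sqrt_pow n c ht]
  generalize ∫ u in 0..2 * t, exp (-c * u) * (u * (2 - u / t)) ^ ((n : ℝ) / 2) = I
  have hκ := Metric.measureReal_ball_pos volume (0 : EuclideanSpace ℝ (Fin n)) one_pos
  field_simp

/-- Volume-growth asymptotics: for a nonzero linear functional `ρ` on a `d`-dimensional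
Euclidean space, `∫_{‖X‖ ≤ t} e^{2ρ(X)} dX ∼ C e^{2‖ρ‖t} t^{(d−1)/2}` as `t → ∞`. -/
theorem exp_linear_ball_integral_asymptotics (d : ℕ)
    (ρ : EuclideanSpace ℝ (Fin d) →L[ℝ] ℝ) (hρ : ρ ≠ 0) :
    ∃ C : ℝ, 0 < C ∧
      Tendsto (fun t : ℝ =>
          (∫ X in Metric.closedBall (0 : EuclideanSpace ℝ (Fin d)) t, Real.exp (2 * ρ X)) /
            (C * Real.exp (2 * ‖ρ‖ * t) * t ^ (((d : ℝ) - 1) / 2)))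
        atTop (nhds 1) := by
  obtain ⟨n, rfl⟩ : ∃ n, d = n + 1 :=
    Nat.exists_eq_succ_of_ne_zero fun hd ↦ hρ (by subst hd; exact Subsingleton.elim _ _)
  obtain ⟨b, hb⟩ := OrthonormalBasis.exists_apply_eq_norm_mul_repr_zero
    finrank_euclideanSpace_fin hρ
  have hrotate : ∀ t, ∫ X in Metric.closedBall (0 : EuclideanSpace ℝ (Fin (n + 1))) t,
      exp (2 * ρ X) =
        ∫ Y in Metric.closedBall (0 : EuclideanSpace ℝ (Fin (n + 1))) t, exp (2 * ‖ρ‖ * Y 0) :=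
    fun t ↦ by
      simp_rw [hb, ← mul_assoc]
      exact b.repr.setIntegral_closedBall_zero_comp (fun Y ↦ exp (2 * ‖ρ‖ * Y 0)) t
  have hdim : (((n + 1 : ℕ) : ℝ) - 1) / 2 = n / 2 := by push_cast; ring
  have hc : 0 < 2 * ‖ρ‖ := by simpa using hρ
  simp_rw [hrotate, hdim]
  exact ⟨_, mul_pos (Metric.measureReal_ball_pos _ _ one_pos)
    (div_pos (by positivity) (rpow_pos_of_pos hc _)),
    EuclideanSpace.tendsto_setIntegral_closedBall_exp_mul_apply_zero_div n hc⟩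
end

section
/- Let G be a locally compact second countable group acting measurably and measure-preservingly on a σ-finite measure space (Y, ν), with a fixed Haar measure on G. Suppose that for every measurable U ⊆ Y with ν(U) > 0 and ν-almost every y ∈ U, the set of return times {g ∈ G : gy ∈ U} has infinite Haar measure. Then for every nonnegative f ∈ L¹(Y, ν) with ∫ f dν > 0, one has ∫_G f(gy) dg = +∞ for ν-almost every y with f(y) > 0. -/
open MeasureTheory

/-! Apply the hypothesis to the superlevel sets `{f ≥ 1/(n+1)}`: a.e. point of such a set
returns to it along a set of group elements of infinite Haar measure, on which `f (g • y)` is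
bounded below by `1/(n+1)`. Every point with `f y > 0` lies in one of countably many such sets. -/

theorem lintegral_eq_top_of_measure_setOf_le_eq_top {α : Type*} [MeasurableSpace α]
    {μ : Measure α} {F : α → ENNReal} (hF : AEMeasurable F μ) {c : ENNReal} (hc : c ≠ 0)
    (hμ : μ {x | c ≤ F x} = ⊤) : ∫⁻ x, F x ∂μ = ⊤ :=
  top_le_iff.1 <| by
    simpa only [hμ, ENNReal.mul_top hc] using mul_meas_ge_le_lintegral₀ hF c

theorem ae_mem_imp_measure_returnTimes_eq_top {G Y : Type*} [MeasurableSpace G]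
    [MeasurableSpace Y] [SMul G Y] {μG : Measure G} {ν : Measure Y}
    (hrec : ∀ U : Set Y, MeasurableSet U → 0 < ν U →
      ∀ᵐ y ∂ν.restrict U, μG {g : G | g • y ∈ U} = ⊤)
    {U : Set Y} (hU : MeasurableSet U) :
    ∀ᵐ y ∂ν, y ∈ U → μG {g : G | g • y ∈ U} = ⊤ := by
  rcases eq_zero_or_pos (ν U) with hnull | hpos
  · filter_upwards [measure_eq_zero_iff_ae_notMem.1 hnull] with y hy hyU
    exact absurd hyU hy
  · exact (ae_restrict_iff' hU).1 (hrec U hU hpos)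

theorem conservative_sets_to_functions_general {G Y : Type*}
    [Group G] [MeasurableSpace G]
    (μG : Measure G)
    [MeasurableSpace Y] (ν : Measure Y)
    [MulAction G Y] [MeasurableSMul G Y]
    (hrec : ∀ U : Set Y, MeasurableSet U → 0 < ν U →
      ∀ᵐ y ∂ν.restrict U, μG {g : G | g • y ∈ U} = ⊤) :
    ∀ f : Y → ℝ, Measurable f → (∀ y, 0 ≤ f y) → Integrable f ν →
      0 < ∫ y, f y ∂ν →
      ∀ᵐ y ∂ν, 0 < f y → ∫⁻ g, ENNReal.ofReal (f (g • y)) ∂μG = ⊤ := by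
  intro f hf _ _ _
  have hlevel (n : ℕ) : ∀ᵐ y ∂ν, 1 / (n + 1 : ℝ) ≤ f y →
      μG {g : G | 1 / (n + 1 : ℝ) ≤ f (g • y)} = ⊤ :=
    ae_mem_imp_measure_returnTimes_eq_top hrec (measurableSet_le measurable_const hf)
  filter_upwards [ae_all_iff.2 hlevel] with y hy hfy
  obtain ⟨n, hn⟩ := exists_nat_one_div_lt hfy
  refine lintegral_eq_top_of_measure_setOf_le_eq_top (c := ENNReal.ofReal (1 / (n + 1)))
    (by fun_prop) (ENNReal.ofReal_pos.2 Nat.one_div_pos_of_nat).ne' ?_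
  exact top_le_iff.1 <| (hy n hn.le).ge.trans <|
    measure_mono fun g hg => ENNReal.ofReal_le_ofReal hg

/-- If, for every positive-measure set `U` and a.e. `y ∈ U`, the return-time set
`{g : g•y ∈ U}` has infinite Haar measure, then for every nonnegative integrable `f` with
positive integral, `∫_G f(gy) dg = ∞` for a.e. `y` with `f(y) > 0`. -/
theorem conservative_sets_to_functions {G Y : Type*}
    [Group G] [TopologicalSpace G] [IsTopologicalGroup G] [LocallyCompactSpace G]
    [SecondCountableTopology G] [MeasurableSpace G] [BorelSpace G]
    (μG : Measure G) [μG.IsHaarMeasure] [μG.IsMulRightInvariant]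
    [MeasurableSpace Y] (ν : Measure Y) [SigmaFinite ν]
    [MulAction G Y] [MeasurableSMul G Y] [SMulInvariantMeasure G Y ν]
    (hrec : ∀ U : Set Y, MeasurableSet U → 0 < ν U →
      ∀ᵐ y ∂ν.restrict U, μG {g : G | g • y ∈ U} = ⊤) :
    ∀ f : Y → ℝ, Measurable f → (∀ y, 0 ≤ f y) → Integrable f ν →
      0 < ∫ y, f y ∂ν →
      ∀ᵐ y ∂ν, 0 < f y → ∫⁻ g, ENNReal.ofReal (f (g • y)) ∂μG = ⊤ :=
  conservative_sets_to_functions_general μG ν hrec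
end

section
/- Let G be a nonamenable unimodular lcsc group acting properly, transitively and isometrically on a metric space X with base point o, and let vol be the pushforward of Haar measure under g ↦ go. Then there exist r₀ > 0 and a constant λ > 1 such that vol(B(o, t + r₀)) ≥ λ · vol(B(o, t)) for all t > 0. -/
/-!
If the growth were not exponential, there would be radii `t` for which the ball of radius
`t + 2r` has volume at most `1 + ε` times that of the ball of radius `t`, with `r → ∞` and
`ε → 0`. If `g` moves `o` by at most `r`, the left translate by `g` of the preimage in `G` of the
ball of radius `t + r` differs from that preimage only inside the annulus between radii `t` and
`t + 2r`, so these preimages form a Følner sequence in `G`. Averaging bounded continuous functions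
over a Følner sequence and passing to an ultrafilter limit gives a left-invariant mean.
-/

open MeasureTheory

/-- A topological group is (topologically) amenable if there is a left-invariant mean on the
space of bounded continuous real-valued functions. -/
def TopologicallyAmenable (G : Type*) [Group G] [TopologicalSpace G] [IsTopologicalGroup G] :
    Prop :=
  ∃ m : BoundedContinuousFunction G ℝ →ₗ[ℝ] ℝ,
    m 1 = 1 ∧ (∀ f : BoundedContinuousFunction G ℝ, 0 ≤ f → 0 ≤ m f) ∧
    ∀ (g : G) (f : BoundedContinuousFunction G ℝ),
      m (f.compContinuous ⟨fun x => g * x, continuous_mul_left g⟩) = m f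

open Filter Topology
open scoped Pointwise symmDiff ENNReal BoundedContinuousFunction

theorem exists_linearMap_tendsto_of_abs_le {ι E : Type*} [AddCommGroup E] [Module ℝ E]
    (L : ι → E →ₗ[ℝ] ℝ) (C : E → ℝ) (hL : ∀ i f, |L i f| ≤ C f) (u : Ultrafilter ι) :
    ∃ m : E →ₗ[ℝ] ℝ, ∀ f, Tendsto (fun i => L i f) u (𝓝 (m f)) := by
  have hK : IsCompact (Set.univ.pi fun f => Set.Icc (-C f) (C f)) :=
    isCompact_univ_pi fun f => isCompact_Icc
  obtain ⟨m, -, hm⟩ := hK.ultrafilter_le_nhds' (u.map fun i => ⇑(L i))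
    (mem_map.2 (univ_mem' fun i f _ => abs_le.mp (hL i f)))
  exact ⟨linearMapOfTendsto m L hm, tendsto_pi_nhds.mp hm⟩

namespace BoundedContinuousFunction

variable {α : Type*} [TopologicalSpace α] [MeasurableSpace α] [OpensMeasurableSpace α]

/-- `⨍` integrates against the finite measure `(μ univ)⁻¹ • μ`, so this is linear for every `μ`. -/
noncomputable def averageₗ (μ : Measure α) : (α →ᵇ ℝ) →ₗ[ℝ] ℝ where
  toFun f := ⨍ x, f x ∂μ
  map_add' f g := integral_add (f.integrable _) (g.integrable _)
  map_smul' c f := integral_smul c (fun x => f x)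

theorem abs_averageₗ_le (μ : Measure α) (f : α →ᵇ ℝ) : |averageₗ μ f| ≤ ‖f‖ := by
  refine (norm_integral_le_of_norm_le_const (Eventually.of_forall f.norm_coe_le_norm)).trans ?_
  exact mul_le_of_le_one_right (norm_nonneg f) measureReal_le_one

theorem averageₗ_nonneg (μ : Measure α) {f : α →ᵇ ℝ} (hf : 0 ≤ f) : 0 ≤ averageₗ μ f :=
  integral_nonneg hf

theorem averageₗ_one (μ : Measure α) [IsFiniteMeasure μ] [NeZero μ] : averageₗ μ 1 = 1 :=
  average_const μ 1

end BoundedContinuousFunction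

theorem norm_setIntegral_sub_setIntegral_le {α E : Type*} [MeasurableSpace α]
    [NormedAddCommGroup E] [NormedSpace ℝ E] {μ : Measure α} {f : α → E} {s t : Set α} {C : ℝ}
    (hs : MeasurableSet s) (ht : MeasurableSet t) (hfs : IntegrableOn f s μ)
    (hft : IntegrableOn f t μ) (hst : μ (s ∆ t) ≠ ∞) (hC : ∀ x, ‖f x‖ ≤ C) :
    ‖∫ x in s, f x ∂μ - ∫ x in t, f x ∂μ‖ ≤ C * μ.real (s ∆ t) := by
  rw [← integral_indicator hs, ← integral_indicator ht,
    ← integral_sub (hfs.integrable_indicator hs) (hft.integrable_indicator ht)]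
  calc ‖∫ x, (s.indicator f x - t.indicator f x) ∂μ‖
      ≤ ∫ x, ‖s.indicator f x - t.indicator f x‖ ∂μ := norm_integral_le_integral_norm _
    _ = ∫ x, ‖(s ∆ t).indicator f x‖ ∂μ := by simp only [← dist_eq_norm, dist_indicator]
    _ = ∫ x in s ∆ t, ‖f x‖ ∂μ := by
        simp only [norm_indicator_eq_indicator_norm]
        exact integral_indicator (hs.symmDiff ht)
    _ ≤ C * μ.real (s ∆ t) :=
        (Real.le_norm_self _).trans <| norm_setIntegral_le_of_norm_le_const hst.lt_top
          fun x _ => (norm_norm (f x)).trans_le (hC x)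

section LeftInvariant

variable {G : Type*} [Group G] [MeasurableSpace G] [MeasurableMul G] {μ : Measure G}
  [μ.IsMulLeftInvariant]

theorem setIntegral_comp_mul_left {E : Type*} [NormedAddCommGroup E] [NormedSpace ℝ E]
    (f : G → E) (g : G) (s : Set G) :
    ∫ x in s, f (g * x) ∂μ = ∫ x in g • s, f x ∂μ := by
  have hpre : (g * ·) ⁻¹' (g • s) = s := by
    ext x; simp [Set.mem_smul_set_iff_inv_smul_mem]
  rw [← (measurePreserving_mul_left μ g).setIntegral_preimage_emb
    (MeasurableEquiv.mulLeft g).measurableEmbedding f (g • s), hpre]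

theorem abs_setAverage_comp_mul_left_sub_le [TopologicalSpace G] [OpensMeasurableSpace G]
    (f : G →ᵇ ℝ) (g : G) {s : Set G} (hs : MeasurableSet s) (hμs : μ s ≠ ∞) :
    |⨍ x in s, f (g * x) ∂μ - ⨍ x in s, f x ∂μ| ≤ ‖f‖ * (μ ((g • s) ∆ s) / μ s).toReal := by
  have hgs : μ (g • s) = μ s := measure_smul μ g s
  have : IsFiniteMeasure (μ.restrict s) := isFiniteMeasure_restrict.2 hμs
  have : IsFiniteMeasure (μ.restrict (g • s)) := isFiniteMeasure_restrict.2 (hgs ▸ hμs)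
  have hsymm : μ ((g • s) ∆ s) ≠ ∞ :=
    measure_ne_top_of_subset symmDiff_le_sup (measure_union_ne_top (hgs ▸ hμs) hμs)
  rw [setAverage_eq, setAverage_eq, setIntegral_comp_mul_left, ← smul_sub,
    smul_eq_mul, abs_mul, abs_inv, abs_of_nonneg measureReal_nonneg, ENNReal.toReal_div]
  calc (μ.real s)⁻¹ * |∫ x in g • s, f x ∂μ - ∫ x in s, f x ∂μ|
      ≤ (μ.real s)⁻¹ * (‖f‖ * μ.real ((g • s) ∆ s)) := by
        gcongr
        exact norm_setIntegral_sub_setIntegral_le (hs.const_smul g) hs (f.integrable _)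
          (f.integrable _) hsymm f.norm_coe_le_norm
    _ = ‖f‖ * ((μ ((g • s) ∆ s)).toReal / (μ s).toReal) := by
        rw [measureReal_def, measureReal_def]; ring

end LeftInvariant

open BoundedContinuousFunction in
theorem MeasureTheory.IsFoelner.topologicallyAmenable {G : Type*} [Group G] [TopologicalSpace G]
    [IsTopologicalGroup G] [MeasurableSpace G] [BorelSpace G] {μ : Measure G}
    [μ.IsMulLeftInvariant] {ι : Type*} {l : Filter ι} [l.NeBot] {F : ι → Set G}
    (hF : IsFoelner G μ l F) : TopologicallyAmenable G := by
  have hFu := hF.mono (Ultrafilter.of_le l)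
  obtain ⟨m, hm⟩ := exists_linearMap_tendsto_of_abs_le (fun i => averageₗ (μ.restrict (F i)))
    (‖·‖) (fun i => abs_averageₗ_le _) (Ultrafilter.of l)
  refine ⟨m, ?_, fun f hf => ge_of_tendsto' (hm f) fun i => averageₗ_nonneg _ hf, fun g f => ?_⟩
  · refine tendsto_nhds_unique_of_eventuallyEq (hm 1) tendsto_const_nhds ?_
    filter_upwards [hFu.eventually_meas_ne_zero, hFu.eventually_meas_ne_top] with i h0 htop
    have := isFiniteMeasure_restrict.2 htop
    have : NeZero (μ.restrict (F i)) := ⟨by simpa [Measure.restrict_eq_zero] using h0⟩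
    exact averageₗ_one _
  · have hsmall : Tendsto (fun i => ‖f‖ * (μ ((g • F i) ∆ F i) / μ (F i)).toReal)
        (Ultrafilter.of l) (𝓝 0) := by
      simpa using ((ENNReal.tendsto_toReal ENNReal.zero_ne_top).comp
        (hFu.tendsto_meas_smul_symmDiff g)).const_mul ‖f‖
    have hdiff : Tendsto (fun i => averageₗ (μ.restrict (F i))
        (f.compContinuous ⟨fun x => g * x, continuous_const_mul g⟩) -
          averageₗ (μ.restrict (F i)) f) (Ultrafilter.of l) (𝓝 0) := by
      refine squeeze_zero_norm' ?_ hsmall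
      filter_upwards [hFu.eventually_measurableSet, hFu.eventually_meas_ne_top] with i hi htop
      exact abs_setAverage_comp_mul_left_sub_le f g hi htop
    simpa using tendsto_nhds_unique (hm _) (by simpa using hdiff.add (hm f))

section OrbitBall

variable (G : Type*) {X : Type*} [Group G] [MetricSpace X] [MulAction G X] (o : X)

def orbitBall (r : ℝ) : Set G := (fun g : G => g • o) ⁻¹' Metric.closedBall o r

variable {G o}

theorem orbitBall_mono {r₁ r₂ : ℝ} (h : r₁ ≤ r₂) : orbitBall G o r₁ ⊆ orbitBall G o r₂ :=
  Set.preimage_mono (Metric.closedBall_subset_closedBall h)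

theorem measurableSet_orbitBall [TopologicalSpace G] [MeasurableSpace G] [OpensMeasurableSpace G]
    [MeasurableSpace X] [BorelSpace X] [ContinuousSMul G X] (r : ℝ) :
    MeasurableSet (orbitBall G o r) :=
  (continuous_id.smul continuous_const).measurable Metric.isClosed_closedBall.measurableSet

theorem map_smul_const_apply_closedBall [TopologicalSpace G] [MeasurableSpace G]
    [OpensMeasurableSpace G] [MeasurableSpace X] [BorelSpace X] [ContinuousSMul G X]
    (μ : Measure G) (r : ℝ) :
    (μ.map fun g => g • o) (Metric.closedBall o r) = μ (orbitBall G o r) :=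
  Measure.map_apply (continuous_id.smul continuous_const).measurable
    Metric.isClosed_closedBall.measurableSet

variable [IsIsometricSMul G X]

theorem mem_smul_orbitBall {g x : G} {r : ℝ} :
    x ∈ g • orbitBall G o r ↔ dist (x • o) (g • o) ≤ r := by
  rw [Set.mem_smul_set_iff_inv_smul_mem, orbitBall, Set.mem_preimage, Metric.mem_closedBall,
    smul_eq_mul, mul_smul, ← dist_smul g, smul_inv_smul]

theorem smul_orbitBall_symmDiff_subset (g : G) (r : ℝ) :
    (g • orbitBall G o r) ∆ orbitBall G o r ⊆
      orbitBall G o (r + dist (g • o) o) \ orbitBall G o (r - dist (g • o) o) := by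
  have hout : g • orbitBall G o r ⊆ orbitBall G o (r + dist (g • o) o) := fun x hx =>
    (dist_triangle _ _ _).trans (add_le_add_left (mem_smul_orbitBall.1 hx) _)
  have hin : orbitBall G o (r - dist (g • o) o) ⊆ g • orbitBall G o r := fun x hx =>
    mem_smul_orbitBall.2 <| (dist_triangle_right _ _ o).trans <| by
      linarith [Metric.mem_closedBall.1 hx]
  have hd : 0 ≤ dist (g • o) o := dist_nonneg
  exact sup_le (Set.sdiff_subset_sdiff hout (orbitBall_mono (by linarith)))
    (Set.sdiff_subset_sdiff (orbitBall_mono (by linarith)) hin)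

variable [TopologicalSpace G] [MeasurableSpace G] [OpensMeasurableSpace G] [MeasurableSpace X]
  [BorelSpace X] [ContinuousSMul G X] {μ : Measure G}

theorem measure_smul_orbitBall_symmDiff_le {t r : ℝ} {ε : ℝ≥0∞}
    (hgrowth : μ (orbitBall G o (t + 2 * r)) < (1 + ε) * μ (orbitBall G o t))
    {g : G} (hg : dist (g • o) o ≤ r) :
    μ ((g • orbitBall G o (t + r)) ∆ orbitBall G o (t + r)) ≤ ε * μ (orbitBall G o (t + r)) := by
  have hr : 0 ≤ r := dist_nonneg.trans hg
  have hsub : orbitBall G o t ⊆ orbitBall G o (t + 2 * r) := orbitBall_mono (by linarith)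
  have hfin : μ (orbitBall G o t) ≠ ∞ := measure_ne_top_of_subset hsub hgrowth.ne_top
  calc μ ((g • orbitBall G o (t + r)) ∆ orbitBall G o (t + r))
      ≤ μ (orbitBall G o (t + 2 * r) \ orbitBall G o t) :=
        measure_mono <| (smul_orbitBall_symmDiff_subset g _).trans <|
          Set.sdiff_subset_sdiff (orbitBall_mono (by linarith)) (orbitBall_mono (by linarith))
    _ = μ (orbitBall G o (t + 2 * r)) - μ (orbitBall G o t) :=
        measure_sdiff hsub (measurableSet_orbitBall t).nullMeasurableSet hfin
    _ ≤ ε * μ (orbitBall G o t) := by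
        rw [tsub_le_iff_left]
        simpa [add_mul] using hgrowth.le
    _ ≤ ε * μ (orbitBall G o (t + r)) := by gcongr; exact orbitBall_mono (by linarith)

theorem isFoelner_orbitBall {ι : Type*} {l : Filter ι} {t r : ι → ℝ} {ε : ι → ℝ≥0∞}
    (hr : Tendsto r l atTop) (hε : Tendsto ε l (𝓝 0))
    (hgrowth : ∀ i, μ (orbitBall G o (t i + 2 * r i)) < (1 + ε i) * μ (orbitBall G o (t i))) :
    IsFoelner G μ l fun i => orbitBall G o (t i + r i) := by
  have hr₀ : ∀ᶠ i in l, 0 ≤ r i := hr.eventually_ge_atTop 0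
  refine ⟨.of_forall fun i => measurableSet_orbitBall _, ?_, ?_, fun g => ?_⟩
  · filter_upwards [hr₀] with i hi
    have h0 : μ (orbitBall G o (t i)) ≠ 0 := fun h => by
      simpa [h] using hgrowth i
    exact (pos_iff_ne_zero.2 h0).trans_le (measure_mono (orbitBall_mono (by linarith))) |>.ne'
  · filter_upwards [hr₀] with i hi
    exact measure_ne_top_of_subset (orbitBall_mono (by linarith)) (hgrowth i).ne_top
  · refine tendsto_of_tendsto_of_tendsto_of_le_of_le' tendsto_const_nhds hε
      (.of_forall fun _ => bot_le) ?_
    filter_upwards [hr.eventually_ge_atTop (dist (g • o) o)] with i hi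
    exact ENNReal.div_le_of_le_mul (measure_smul_orbitBall_symmDiff_le (hgrowth i) hi)

end OrbitBall

theorem exponential_growth_of_nonamenable_general {G X : Type*}
    [Group G] [TopologicalSpace G] [IsTopologicalGroup G]
    [MeasurableSpace G] [BorelSpace G]
    (μG : Measure G) [μG.IsHaarMeasure]
    [MetricSpace X] [MeasurableSpace X] [BorelSpace X] [MulAction G X] [ContinuousSMul G X]
    [IsIsometricSMul G X]
    (hNA : ¬ TopologicallyAmenable G) (o : X) :
    ∃ r₀ > (0 : ℝ), ∃ lam > (1 : ℝ), ∀ t > (0 : ℝ),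
      ENNReal.ofReal lam * (μG.map fun g => g • o) (Metric.closedBall o t) ≤
        (μG.map fun g => g • o) (Metric.closedBall o (t + r₀)) := by
  by_contra! hgrowth
  choose t _ ht using fun n : ℕ => hgrowth (2 * (n + 1)) (by positivity) (1 + 1 / (n + 1))
    (lt_add_of_pos_right _ (by positivity))
  have hF : IsFoelner G μG atTop fun n : ℕ => orbitBall G o (t n + (n + 1)) := by
    refine isFoelner_orbitBall (tendsto_atTop_add_const_right _ 1 tendsto_natCast_atTop_atTop)
      (ENNReal.ofReal_zero ▸ ENNReal.tendsto_ofReal tendsto_one_div_add_atTop_nhds_zero_nat)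
      fun n => ?_
    rw [← map_smul_const_apply_closedBall, ← map_smul_const_apply_closedBall,
      ← ENNReal.ofReal_one, ← ENNReal.ofReal_add zero_le_one (by positivity)]
    exact ht n
  exact hNA hF.topologicallyAmenable

/-- Exponential volume growth for nonamenable groups: if a nonamenable unimodular lcsc group
`G` acts properly, transitively and isometrically on a metric space `X`, and `vol` is the
pushforward of Haar measure under `g ↦ g • o`, then there are `r₀ > 0` and `λ > 1` with
`vol(B(o, t + r₀)) ≥ λ · vol(B(o, t))` for all `t > 0`. -/
theorem exponential_growth_of_nonamenable {G X : Type*}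
    [Group G] [TopologicalSpace G] [IsTopologicalGroup G] [LocallyCompactSpace G]
    [SecondCountableTopology G] [MeasurableSpace G] [BorelSpace G]
    (μG : Measure G) [μG.IsHaarMeasure] [μG.IsMulRightInvariant]
    [MetricSpace X] [MeasurableSpace X] [BorelSpace X] [MulAction G X] [ContinuousSMul G X] [ProperSMul G X]
    [IsIsometricSMul G X] (htrans : MulAction.IsPretransitive G X)
    (hNA : ¬ TopologicallyAmenable G) (o : X) :
    ∃ r₀ > (0 : ℝ), ∃ lam > (1 : ℝ), ∀ t > (0 : ℝ),
      ENNReal.ofReal lam * (μG.map fun g => g • o) (Metric.closedBall o t) ≤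
        (μG.map fun g => g • o) (Metric.closedBall o (t + r₀)) :=
  exponential_growth_of_nonamenable_general μG hNA o
end

section
/- Let 𝔞 be a Euclidean space, ρ a nonzero linear functional with unit dual vector ρ̂, and let A > 0. For t > 0 set R⁺(t) = {X ∈ 𝔞 : t − A ≤ ‖X‖ ≤ t + A and ⟨ρ̂, X⟩ ≥ t − (log t)²}. Then there is a constant C such that every X ∈ R⁺(t) satisfies ‖X − ⟨X, ρ̂⟩ρ̂‖ ≤ C t^{1/2} log t for all sufficiently large t; consequently X/‖X‖ → ρ̂ uniformly on R⁺(t) as t → ∞, i.e. ‖X/‖X‖ − ρ̂‖ = O(t^{-1/2} log t). -/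
open Filter
open scoped RealInnerProductSpace

/-!
With `n = ‖X‖` and `a = ⟪X, ρ̂⟫`, both quantities are controlled by the deficit `n - a`, which on
`R⁺(t)` is at most `A + (log t)² ≤ 2 (log t)²`: the orthogonal component has squared norm
`n² - a² ≤ 2n (n - a)`, and `‖X/n - ρ̂‖² = 2 (n - a) / n`, while `n ≍ t`.
-/

section UnitVector

variable {E : Type*} [NormedAddCommGroup E] [InnerProductSpace ℝ E] {r : E}

theorem real_inner_le_norm_of_norm_eq_one (hr : ‖r‖ = 1) (X : E) : ⟪X, r⟫ ≤ ‖X‖ := by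
  simpa [hr] using real_inner_le_norm X r

theorem norm_sub_inner_smul_sq_le (hr : ‖r‖ = 1) (X : E) :
    ‖X - ⟪X, r⟫ • r‖ ^ 2 ≤ 2 * ‖X‖ * (‖X‖ - ⟪X, r⟫) := by
  have hcs := real_inner_le_norm_of_norm_eq_one hr X
  have hpyth : ‖X - ⟪X, r⟫ • r‖ ^ 2 = ‖X‖ ^ 2 - ⟪X, r⟫ ^ 2 := by
    rw [norm_sub_sq_real, real_inner_smul_right, norm_smul, hr, Real.norm_eq_abs, mul_one, sq_abs]
    ring
  rw [hpyth]
  nlinarith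

theorem norm_inv_smul_sub_sq (hr : ‖r‖ = 1) {X : E} (hX : X ≠ 0) :
    ‖‖X‖⁻¹ • X - r‖ ^ 2 = 2 * (‖X‖ - ⟪X, r⟫) / ‖X‖ := by
  have hX' : ‖X‖ ≠ 0 := norm_ne_zero_iff.mpr hX
  rw [norm_sub_sq_real, real_inner_smul_left, norm_smul, hr, norm_inv, norm_norm]
  field_simp
  ring

end UnitVector

theorem directions_concentrate_general {E : Type*} [NormedAddCommGroup E] [InnerProductSpace ℝ E]
    (rhat : E) (hrhat : ‖rhat‖ = 1) (A : ℝ) :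
    ∃ C C' : ℝ, ∀ᶠ t : ℝ in atTop, ∀ X : E,
      (t - A ≤ ‖X‖ ∧ ‖X‖ ≤ t + A ∧ t - (Real.log t) ^ 2 ≤ ⟪rhat, X⟫) →
        ‖X - ⟪X, rhat⟫ • rhat‖ ≤ C * t ^ ((1 : ℝ) / 2) * Real.log t ∧
        ‖‖X‖⁻¹ • X - rhat‖ ≤ C' * t ^ (-(1 : ℝ) / 2) * Real.log t := by
  refine ⟨3, 3, ?_⟩
  filter_upwards [eventually_ge_atTop (2 * A), eventually_ge_atTop 1,
    ((tendsto_pow_atTop two_ne_zero).comp Real.tendsto_log_atTop).eventually_ge_atTop A]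
    with t hAt ht (hAL : A ≤ Real.log t ^ 2)
  rintro X ⟨hlow, hup, hinner⟩
  set L := Real.log t
  have hL : 0 ≤ L := Real.log_nonneg ht
  have hX : 0 < ‖X‖ := by linarith
  have hdeficit : ‖X‖ - ⟪X, rhat⟫ ≤ 2 * L ^ 2 := by
    rw [real_inner_comm]; linarith
  have hcs := real_inner_le_norm_of_norm_eq_one hrhat X
  have hsqrt : √t ^ 2 = t := Real.sq_sqrt (by linarith)
  rw [← Real.sqrt_eq_rpow, neg_div, Real.rpow_neg (by linarith), ← Real.sqrt_eq_rpow]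
  constructor
  · refine le_of_sq_le_sq ?_ (by positivity)
    calc ‖X - ⟪X, rhat⟫ • rhat‖ ^ 2 ≤ 2 * ‖X‖ * (‖X‖ - ⟪X, rhat⟫) :=
          norm_sub_inner_smul_sq_le hrhat X
      _ ≤ 2 * (t + A) * (2 * L ^ 2) := by gcongr; linarith
      _ ≤ (3 * √t * L) ^ 2 := by nlinarith
  · refine le_of_sq_le_sq ?_ (by positivity)
    rw [norm_inv_smul_sub_sq hrhat (norm_pos_iff.mp hX)]
    calc 2 * (‖X‖ - ⟪X, rhat⟫) / ‖X‖ ≤ 2 * (2 * L ^ 2) / (t / 2) := by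
          gcongr; linarith
      _ ≤ (3 * (√t)⁻¹ * L) ^ 2 := by
          rw [mul_pow, mul_pow, inv_pow, hsqrt]
          field_simp
          nlinarith

/-- Concentration of directions around `ρ̂` in the dominating region: with
`R⁺(t) = {X : t − A ≤ ‖X‖ ≤ t + A, ⟨ρ̂, X⟩ ≥ t − (log t)²}`, the component of `X ∈ R⁺(t)`
orthogonal to `ρ̂` is `O(t^{1/2} log t)`, and consequently `‖X/‖X‖ − ρ̂‖ = O(t^{-1/2} log t)`,
uniformly on `R⁺(t)` as `t → ∞`. -/
theorem directions_concentrate {E : Type*} [NormedAddCommGroup E] [InnerProductSpace ℝ E]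
    (rhat : E) (hrhat : ‖rhat‖ = 1) (A : ℝ) (hA : 0 < A) :
    ∃ C C' : ℝ, ∀ᶠ t : ℝ in atTop, ∀ X : E,
      (t - A ≤ ‖X‖ ∧ ‖X‖ ≤ t + A ∧ t - (Real.log t) ^ 2 ≤ ⟪rhat, X⟫) →
        ‖X - ⟪X, rhat⟫ • rhat‖ ≤ C * t ^ ((1 : ℝ) / 2) * Real.log t ∧
        ‖‖X‖⁻¹ • X - rhat‖ ≤ C' * t ^ (-(1 : ℝ) / 2) * Real.log t :=
  directions_concentrate_general rhat hrhat A
end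

section
/- Let G = SL(3,ℝ), let P be the subgroup of upper triangular matrices, let χ_P be the modular character of P determined by χ_P(e^H m n) = e^{2ρ(H)} with ρ(diag(s₁,s₂,s₃)) = s₁ − s₃, let U = ker χ_P, and let w₀ be the permutation matrix with entries w₀(1,3) = w₀(3,1) = 1, w₀(2,2) = −1. Then U ∩ w₀ U w₀^{-1} equals the group of diagonal matrices diag(±e^s, ±e^{-2s}, ±e^s) with s ∈ ℝ and determinant 1; in particular U ∩ w₀ U w₀^{-1} is a noncompact abelian-by-finite subgroup of SL(3,ℝ). -/
/-!
An element of `U ∩ w₀Uw₀⁻¹` is upper triangular, and also lower triangular because conjugation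
by `w₀` reverses the order of the basis; so it is diagonal, and `det = 1` together with
`|g₁₁| = |g₃₃|` forces the shape `diag(±e^s, ±e^{-2s}, ±e^s)`. Its `(1,1)` entry `e^s` is
unbounded on this set, which is therefore not compact.
-/

open Matrix

noncomputable instance : TopologicalSpace (Matrix.SpecialLinearGroup (Fin 3) ℝ) :=
  show TopologicalSpace {A : Matrix (Fin 3) (Fin 3) ℝ // A.det = 1} from inferInstance

namespace Matrix

variable {R : Type*}

theorem IsUpperTriangular.isDiag_of_isLowerTriangular {n : Type*} [LinearOrder n] [Zero R]
    {M : Matrix n n R} (hu : M.IsUpperTriangular) (hl : M.IsLowerTriangular) : M.IsDiag :=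
  fun _ _ hij => hij.lt_or_gt.elim (fun h => hl (OrderDual.toDual_lt_toDual.2 h)) (fun h => hu h)

section LongestWeylElement

variable [Ring R]

def longestWeylElt : Matrix (Fin 3) (Fin 3) R := !![0, 0, 1; 0, -1, 0; 1, 0, 0]

theorem longestWeylElt_mul_self :
    (longestWeylElt * longestWeylElt : Matrix (Fin 3) (Fin 3) R) = 1 := by
  ext i j
  fin_cases i <;> fin_cases j <;> simp [longestWeylElt, mul_apply, Fin.sum_univ_three]

theorem longestWeylElt_conj (M : Matrix (Fin 3) (Fin 3) R) :
    longestWeylElt * M * longestWeylElt =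
      !![M 2 2, -M 2 1, M 2 0; -M 1 2, M 1 1, -M 1 0; M 0 2, -M 0 1, M 0 0] := by
  ext i j
  fin_cases i <;> fin_cases j <;>
    simp [longestWeylElt, mul_apply, Fin.sum_univ_three, vecMul, dotProduct]

theorem longestWeylElt_conj_diagonal (x y z : R) :
    longestWeylElt * diagonal ![x, y, z] * longestWeylElt = diagonal ![z, y, x] := by
  rw [longestWeylElt_conj]
  ext i j
  fin_cases i <;> fin_cases j <;> simp

theorem isUpperTriangular_longestWeylElt_conj_iff (M : Matrix (Fin 3) (Fin 3) R) :
    (longestWeylElt * M * longestWeylElt).IsUpperTriangular ↔ M.IsLowerTriangular := by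
  rw [longestWeylElt_conj]
  constructor
  · intro h i j (hij : i < j)
    have := @h i.rev j.rev (Fin.rev_lt_rev.2 hij)
    fin_cases i <;> fin_cases j <;> simp_all [Fin.rev]
  · intro h i j hij
    have := @h i.rev j.rev (OrderDual.toDual_lt_toDual.2 (Fin.rev_lt_rev.2 hij))
    fin_cases i <;> fin_cases j <;> simp_all [Fin.rev]

end LongestWeylElement

/-- The modular character of the upper triangular subgroup is `χ_P(p) = (|p₁₁| / |p₃₃|)²`. -/
def InKerModularChar (M : Matrix (Fin 3) (Fin 3) ℝ) : Prop :=
  M.IsUpperTriangular ∧ (|M 0 0| / |M 2 2|) ^ 2 = 1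

end Matrix

open Real

theorem exists_sign_mul_abs (x : ℝ) : ∃ a : ℝ, (a = 1 ∨ a = -1) ∧ x = a * |x| := by
  rcases abs_choice x with h | h
  · exact ⟨1, Or.inl rfl, by rw [h, one_mul]⟩
  · exact ⟨-1, Or.inr rfl, by rw [h, neg_one_mul, neg_neg]⟩

theorem abs_sign_mul {a : ℝ} (ha : a = 1 ∨ a = -1) (x : ℝ) : |a * x| = |x| := by
  rw [abs_mul, (abs_eq zero_le_one).2 ha, one_mul]

theorem div_abs_sq_eq_one_iff {x z : ℝ} : (|x| / |z|) ^ 2 = 1 ↔ z ≠ 0 ∧ |x| = |z| := by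
  rw [pow_eq_one_iff_of_nonneg (by positivity) two_ne_zero]
  constructor
  · intro h
    have hz : z ≠ 0 := by rintro rfl; simp at h
    exact ⟨hz, (div_eq_one_iff_eq (abs_ne_zero.2 hz)).1 h⟩
  · rintro ⟨hz, h⟩
    rw [h, div_self (abs_ne_zero.2 hz)]

theorem exists_sign_exp_of_mul_eq_one {x y z : ℝ} (h : x * y * z = 1) (hxz : |x| = |z|) :
    ∃ s a b c : ℝ, (a = 1 ∨ a = -1) ∧ (b = 1 ∨ b = -1) ∧ (c = 1 ∨ c = -1) ∧
      x = a * exp s ∧ y = b * exp (-2 * s) ∧ z = c * exp s := by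
  have hz : 0 < |z| := abs_pos.2 (right_ne_zero_of_mul_eq_one h)
  have hes : exp (log |z|) = |z| := exp_log hz
  have hy : |y| = exp (-2 * log |z|) := by
    rw [show -2 * log |z| = -(log |z| + log |z|) by ring, exp_neg, exp_add, hes]
    refine eq_inv_of_mul_eq_one_left ?_
    have habs := congrArg abs h
    rw [abs_mul, abs_mul, abs_one, hxz] at habs
    linear_combination habs
  obtain ⟨a, ha, hxa⟩ := exists_sign_mul_abs x
  obtain ⟨b, hb, hyb⟩ := exists_sign_mul_abs y
  obtain ⟨c, hc, hzc⟩ := exists_sign_mul_abs z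
  exact ⟨log |z|, a, b, c, ha, hb, hc, by rwa [hes, ← hxz], by rwa [← hy], by rwa [hes]⟩

theorem Set.mem_image_conj_iff {G : Type*} [Group G] {w g : G} {U : Set G} :
    g ∈ (fun h => w * h * w⁻¹) '' U ↔ w⁻¹ * g * w ∈ U :=
  Set.mem_image_iff_of_inverse (f := fun h => w * h * w⁻¹) (g := fun h => w⁻¹ * h * w)
    (fun _ => by group) (fun _ => by group)

theorem inKerModularChar_and_longestWeylElt_conj_iff (M : Matrix (Fin 3) (Fin 3) ℝ)
    (hM : M.det = 1) :
    M.InKerModularChar ∧ (longestWeylElt * M * longestWeylElt).InKerModularChar ↔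
    ∃ s a b c : ℝ, (a = 1 ∨ a = -1) ∧ (b = 1 ∨ b = -1) ∧ (c = 1 ∨ c = -1) ∧
      M = diagonal ![a * exp s, b * exp (-2 * s), c * exp s] := by
  constructor
  · rintro ⟨⟨hu, hr⟩, hconj, -⟩
    have hdiag : M = diagonal ![M 0 0, M 1 1, M 2 2] := by
      rw [(hu.isDiag_of_isLowerTriangular
        ((isUpperTriangular_longestWeylElt_conj_iff M).1 hconj)).diagonal_diag.symm]
      ext i j
      fin_cases i <;> fin_cases j <;> rfl
    rw [hdiag, det_diagonal, Fin.prod_univ_three] at hM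
    simp only [cons_val_zero, cons_val_one, cons_val_two, head_cons, tail_cons] at hM
    obtain ⟨s, a, b, c, ha, hb, hc, hx, hy, hz⟩ :=
      exists_sign_exp_of_mul_eq_one hM (div_abs_sq_eq_one_iff.1 hr).2
    exact ⟨s, a, b, c, ha, hb, hc, by rw [hdiag, hx, hy, hz]⟩
  · rintro ⟨s, a, b, c, ha, hb, hc, rfl⟩
    rw [longestWeylElt_conj_diagonal]
    have hratio {u v : ℝ} (hu : u = 1 ∨ u = -1) (hv : v = 1 ∨ v = -1) :
        (|u * exp s| / |v * exp s|) ^ 2 = 1 :=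
      div_abs_sq_eq_one_iff.2
        ⟨by rcases hv with rfl | rfl <;> simp, by rw [abs_sign_mul hu, abs_sign_mul hv]⟩
    exact ⟨⟨blockTriangular_diagonal _, by simpa using hratio ha hc⟩,
      ⟨blockTriangular_diagonal _, by simpa using hratio hc ha⟩⟩

theorem not_isCompact_of_not_bddAbove_apply {n : Type*} [Fintype n] [DecidableEq n]
    {S : Set (Matrix.SpecialLinearGroup n ℝ)} (i j : n)
    (h : ¬BddAbove ((fun g : Matrix.SpecialLinearGroup n ℝ => (g : Matrix n n ℝ) i j) '' S)) :
    ¬IsCompact S :=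
  fun hS => h (hS.image (by fun_prop)).bddAbove

theorem not_isCompact_setOf_diagonal_sign_exp :
    ¬IsCompact {g : Matrix.SpecialLinearGroup (Fin 3) ℝ | ∃ s a b c : ℝ,
      (a = 1 ∨ a = -1) ∧ (b = 1 ∨ b = -1) ∧ (c = 1 ∨ c = -1) ∧
      (g : Matrix (Fin 3) (Fin 3) ℝ) = diagonal ![a * exp s, b * exp (-2 * s), c * exp s]} := by
  refine not_isCompact_of_not_bddAbove_apply 0 0 (not_bddAbove_iff.2 fun B => ?_)
  have hdet : (diagonal ![exp B, exp (-2 * B), exp B]).det = 1 := by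
    simp only [det_diagonal, Fin.prod_univ_three, cons_val_zero, cons_val_one, cons_val_two,
      head_cons, tail_cons, ← exp_add]
    ring_nf
    exact exp_zero
  refine ⟨exp B, ⟨⟨_, hdet⟩, ⟨B, 1, 1, 1, by simp⟩, by simp⟩, ?_⟩
  linarith [add_one_le_exp B]

/-- The explicit `SL(3,ℝ)` instance of the stabilizer computation: with `U` the kernel of
the modular character of the upper triangular subgroup (upper triangular matrices `p` with
`(|p₁₁|/|p₃₃|)² = 1`) and `w₀` the longest Weyl element, the intersection `U ∩ w₀Uw₀⁻¹` is
exactly the group of diagonal matrices `diag(±e^s, ±e^{−2s}, ±e^s)` of determinant 1; in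
particular it is noncompact. -/
theorem sl3_U_inter_conj (w₀ : Matrix.SpecialLinearGroup (Fin 3) ℝ)
    (hw₀ : (w₀ : Matrix (Fin 3) (Fin 3) ℝ) = !![0, 0, 1; 0, -1, 0; 1, 0, 0])
    (U : Set (Matrix.SpecialLinearGroup (Fin 3) ℝ))
    (hU : U = {g : Matrix.SpecialLinearGroup (Fin 3) ℝ |
      (∀ i j : Fin 3, j < i → (g : Matrix (Fin 3) (Fin 3) ℝ) i j = 0) ∧
      (|(g : Matrix (Fin 3) (Fin 3) ℝ) 0 0| / |(g : Matrix (Fin 3) (Fin 3) ℝ) 2 2|) ^ 2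
        = 1}) :
    U ∩ ((fun h => w₀ * h * w₀⁻¹) '' U) =
        {g : Matrix.SpecialLinearGroup (Fin 3) ℝ | ∃ s a b c : ℝ,
          (a = 1 ∨ a = -1) ∧ (b = 1 ∨ b = -1) ∧ (c = 1 ∨ c = -1) ∧
          (g : Matrix (Fin 3) (Fin 3) ℝ) =
            Matrix.diagonal ![a * Real.exp s, b * Real.exp (-2 * s), c * Real.exp s]} ∧
      ¬ IsCompact (U ∩ ((fun h => w₀ * h * w₀⁻¹) '' U)) := by
  refine (and_iff_left_of_imp fun h => h ▸ not_isCompact_setOf_diagonal_sign_exp).2 ?_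
  have hw₀' : (w₀ : Matrix (Fin 3) (Fin 3) ℝ) = longestWeylElt := hw₀
  have hsq : w₀ * w₀ = 1 := by
    ext i j
    rw [Matrix.SpecialLinearGroup.coe_mul, hw₀', longestWeylElt_mul_self,
      Matrix.SpecialLinearGroup.coe_one]
  ext g
  rw [Set.mem_inter_iff, Set.mem_image_conj_iff, inv_eq_of_mul_eq_one_right hsq, hU]
  simp only [Set.mem_ofPred_eq, Matrix.SpecialLinearGroup.coe_mul, hw₀']
  exact inKerModularChar_and_longestWeylElt_conj_iff g g.2
end
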